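/- arXiv:1911.02993 — 6 statements merged into one kernel-verified Lean document; each statement's English description precedes it below -/
import Mathlib

section
/- Convexity of a prosumer's penalty share in its own offer (key step in the existence proof of Theorem 1): let s, S, c ∈ ℝ and λ ≥ 0 satisfy S ≥ 0 and s ≤ S. Then the function g : ℝ → ℝ defined by g(x) = λ · (s + x − c)⁺ · (x − c)⁺ / (S + (x − c)⁺), with the convention g(x) = 0 whenever S + (x − c)⁺ = 0, is convex on ℝ. -/
/-! With `u = x - c` and `t = max 0 (-s)`, the penalty share equals `λ φ (max u t)` where
`φ u = (s + u) u / (S + u)`. On `[t, ∞)` we have `φ u = u + (s - S) + S (S - s) / (S + u)`, which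
is convex because `S (S - s) ≥ 0`, and `φ` attains its minimum `0` at `t`. Freezing a convex
function at its minimum to the left of it keeps it convex. -/

open Set

theorem ConvexOn.monotoneOn_Ici_of_isMinOn {f : ℝ → ℝ} {a : ℝ} (hf : ConvexOn ℝ (Ici a) f)
    (hmin : IsMinOn f (Ici a) a) : MonotoneOn f (Ici a) := by
  intro x hx y hy hxy
  rcases (mem_Ici.mp hx).eq_or_lt with rfl | hax
  · exact hmin hy
  · exact hf.le_right_of_left_le'' self_mem_Ici hy hax hxy (hmin hx)

theorem ConvexOn.comp_max_of_isMinOn {f : ℝ → ℝ} {a : ℝ} (hf : ConvexOn ℝ (Ici a) f)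
    (hmin : IsMinOn f (Ici a) a) : ConvexOn ℝ univ fun x => f (max x a) := by
  have himage : (max · a) '' univ = Ici a :=
    Subset.antisymm (by rintro _ ⟨x, -, rfl⟩; exact le_max_right x a)
      fun y hy => ⟨y, mem_univ y, max_eq_left hy⟩
  have hmax : ConvexOn ℝ univ (max · a) :=
    (convexOn_id convex_univ).sup (convexOn_const a convex_univ)
  have hmono := hf.monotoneOn_Ici_of_isMinOn hmin
  rw [← himage] at hf hmono
  exact hf.comp hmax hmono

theorem convexOn_const_div_add {K S : ℝ} (hK : 0 ≤ K) :
    ConvexOn ℝ (Ioi (-S)) fun u => K / (S + u) := by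
  have hdom : (S + ·) ⁻¹' Ioi 0 = Ioi (-S) := by ext u; simp [neg_lt_iff_pos_add']
  simpa [hdom, div_eq_mul_inv, Function.comp_def] using
    ((convexOn_zpow (𝕜 := ℝ) (-1)).translate_right S).smul hK

theorem convexOn_add_mul_div_add {s S : ℝ} (hS : 0 ≤ S) (hsS : s ≤ S) :
    ConvexOn ℝ (Ici (max 0 (-s))) fun u => (s + u) * u / (S + u) := by
  have hpole : ConvexOn ℝ (Ici (max 0 (-s))) fun u => S * (S - s) / (S + u) := by
    rcases hS.eq_or_lt with rfl | hS
    · simpa using convexOn_const 0 (convex_Ici (max 0 (-s)))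
    · refine (convexOn_const_div_add (mul_nonneg hS.le (sub_nonneg.2 hsS))).subset
        (fun u hu => ?_) (convex_Ici _)
      have := le_of_max_le_left (mem_Ici.mp hu)
      simp only [mem_Ioi]
      linarith
  refine ((convexOn_id (convex_Ici _)).add (convexOn_const (s - S) (convex_Ici _))).add hpole
    |>.congr fun u hu => ?_
  obtain ⟨hu, hsu⟩ := max_le_iff.mp (mem_Ici.mp hu)
  rcases eq_or_ne (S + u) 0 with hSu | hSu
  · obtain ⟨rfl, rfl⟩ : S = 0 ∧ u = 0 := ⟨by linarith, by linarith⟩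
    obtain rfl : s = 0 := by linarith
    simp
  · show u + (s - S) + S * (S - s) / (S + u) = (s + u) * u / (S + u)
    field_simp
    ring

theorem add_max_zero_neg_mul_max_zero_neg (s : ℝ) : (s + max 0 (-s)) * max 0 (-s) = 0 := by
  rcases max_choice 0 (-s) with h | h <;> rw [h] <;> ring

theorem isMinOn_add_mul_div_add {s S : ℝ} (hS : 0 ≤ S) :
    IsMinOn (fun u => (s + u) * u / (S + u)) (Ici (max 0 (-s))) (max 0 (-s)) := by
  intro u hu
  obtain ⟨hu, hsu⟩ := max_le_iff.mp (mem_Ici.mp hu)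
  show (s + max 0 (-s)) * max 0 (-s) / (S + max 0 (-s)) ≤ (s + u) * u / (S + u)
  rw [add_max_zero_neg_mul_max_zero_neg, zero_div]
  exact div_nonneg (mul_nonneg (by linarith) hu) (by linarith)

theorem max_add_mul_max_div_add_max_eq (s S u : ℝ) :
    max (s + u) 0 * max u 0 / (S + max u 0) =
      (s + max u (max 0 (-s))) * max u (max 0 (-s)) / (S + max u (max 0 (-s))) := by
  rcases le_total u (max 0 (-s)) with hu | hu
  · rw [max_eq_right hu, add_max_zero_neg_mul_max_zero_neg, zero_div]
    rcases le_max_iff.mp hu with hu | hu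
    · rw [max_eq_right hu, mul_zero, zero_div]
    · rw [max_eq_right (by linarith : s + u ≤ 0), zero_mul, zero_div]
  · obtain ⟨hu0, hsu⟩ := max_le_iff.mp hu
    rw [max_eq_left hu, max_eq_left hu0, max_eq_left (by linarith : 0 ≤ s + u)]

/-- Convexity of a prosumer's penalty share in its own offer: for `S ≥ 0`,
`s ≤ S` and `λ ≥ 0`, the map
`x ↦ λ (s + x - c)⁺ (x - c)⁺ / (S + (x - c)⁺)` (set to `0` when the
denominator vanishes) is convex on `ℝ`. -/
theorem penalty_share_convex (lam s S c : ℝ) (hlam : 0 ≤ lam)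
    (hS : 0 ≤ S) (hsS : s ≤ S) :
    ConvexOn ℝ Set.univ (fun x : ℝ =>
      if S + max (x - c) 0 = 0 then 0
      else lam * max (s + x - c) 0 * max (x - c) 0 / (S + max (x - c) 0)) := by
  have hglued := ((convexOn_add_mul_div_add hS hsS).comp_max_of_isMinOn
    (isMinOn_add_mul_div_add hS)).translate_right (-c) |>.smul hlam
  rw [preimage_univ] at hglued
  refine hglued.congr fun x _ => ?_
  have hshare := max_add_mul_max_div_add_max_eq s S (x - c)
  simp only [smul_eq_mul, Function.comp_apply, neg_add_eq_sub, ← hshare, add_sub_assoc]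
  split_ifs with hden
  · rw [hden, div_zero, mul_zero]
  · ring
end

section
/- First-order characterization of the prosumer's equilibrium offer (Theorem 2): let μ be an atomless probability measure on ℝ supported on the compact interval [0, C̄] with cumulative distribution function F, let u : ℝ → ℝ be concave and continuously differentiable, and let ρ ≥ 0, κ > 0 and d⁰ ∈ ℝ. If x* ∈ (0, C̄) maximizes π(x) = ρ·x + ∫ u(d⁰ + c − x) dμ(c) − κ·∫ (x − c)⁺ dμ(c) over [0, C̄], then κ·F(x*) = ρ − ∫ u'(d⁰ + c − x*) dμ(c). -/
/-!
An interior maximizer `x*` of the profit is a critical point. Differentiating under the integral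
sign, `x ↦ ∫ u(d⁰ + c - x) dμ` has derivative `-∫ u'(d⁰ + c - x*) dμ`, a dominated convergence
argument because `u'` is bounded on the compact range of arguments, and the expected shortfall
`x ↦ ∫ (x - c)⁺ dμ` has derivative `F(x*)`: the integrand is Lipschitz in `x` with derivative
`1_{c < x*}` off the `μ`-null kink `c = x*`.
-/

open MeasureTheory Set Filter Topology

section

variable {μ : Measure ℝ} [IsFiniteMeasure μ] {a b : ℝ}

theorem Continuous.integrable_of_ae_mem_Icc {E : Type*} [NormedAddCommGroup E] {g : ℝ → E}
    (hg : Continuous g) (hμ : ∀ᵐ c ∂μ, c ∈ Icc a b) : Integrable g μ := by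
  rw [← Measure.restrict_eq_self_of_ae_mem hμ]
  exact hg.integrableOn_Icc

theorem hasDerivAt_integral_comp_sub {f f' : ℝ → ℝ} (hf : ∀ z, HasDerivAt f (f' z) z)
    (hf' : Continuous f') (hμ : ∀ᵐ c ∂μ, c ∈ Icc a b) (x₀ : ℝ) :
    HasDerivAt (fun x => ∫ c, f (c - x) ∂μ) (-∫ c, f' (c - x₀) ∂μ) x₀ := by
  have hf_cont : Continuous f := continuous_iff_continuousAt.2 fun z => (hf z).continuousAt
  obtain ⟨M, hM⟩ :=
    (isCompact_Icc (a := a - x₀ - 1) (b := b - x₀ + 1)).exists_bound_of_continuousOn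
      hf'.continuousOn
  have hbound : ∀ᵐ c ∂μ, ∀ x ∈ Metric.ball x₀ 1, ‖-f' (c - x)‖ ≤ M := by
    filter_upwards [hμ] with c hc x hx
    rw [Metric.mem_ball, Real.dist_eq, abs_lt] at hx
    rw [norm_neg]
    exact hM _ ⟨by linarith [hc.1], by linarith [hc.2]⟩
  have hderiv : ∀ᵐ c ∂μ, ∀ x ∈ Metric.ball x₀ 1, HasDerivAt (fun y => f (c - y)) (-f' (c - x)) x :=
    Eventually.of_forall fun c x _ => (hf (c - x)).comp_const_sub c x
  rw [← integral_neg]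
  exact (hasDerivAt_integral_of_dominated_loc_of_deriv_le (Metric.ball_mem_nhds x₀ one_pos)
    (Eventually.of_forall fun x => (hf_cont.comp (continuous_sub_right x)).aestronglyMeasurable)
    ((hf_cont.comp (continuous_sub_right x₀)).integrable_of_ae_mem_Icc hμ)
    (hf'.comp (continuous_sub_right x₀)).neg.aestronglyMeasurable
    hbound (integrable_const M) hderiv).2

theorem hasDerivAt_max_sub_const_zero {c x : ℝ} (hcx : c ≠ x) :
    HasDerivAt (fun y => max (y - c) 0) ((Iio x).indicator 1 c) x := by
  rcases hcx.lt_or_gt with hlt | hgt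
  · have heq : (fun y => y - c) =ᶠ[𝓝 x] fun y => max (y - c) 0 := by
      filter_upwards [Ioi_mem_nhds hlt] with y hy
      exact (max_eq_left (sub_nonneg.2 (le_of_lt hy))).symm
    rw [indicator_of_mem (mem_Iio.2 hlt)]
    exact heq.hasDerivAt_iff.1 ((hasDerivAt_id x).sub_const c)
  · have heq : (fun _ => (0 : ℝ)) =ᶠ[𝓝 x] fun y => max (y - c) 0 := by
      filter_upwards [Iio_mem_nhds hgt] with y hy
      exact (max_eq_right (sub_nonpos.2 (le_of_lt hy))).symm
    rw [indicator_of_notMem (notMem_Iio.2 hgt.le)]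
    exact heq.hasDerivAt_iff.1 (hasDerivAt_const x 0)

theorem hasDerivAt_integral_max_sub_zero (hμ : ∀ᵐ c ∂μ, c ∈ Icc a b) {x₀ : ℝ}
    (hx₀ : μ {x₀} = 0) :
    HasDerivAt (fun x => ∫ c, max (x - c) 0 ∂μ) (μ (Iic x₀)).toReal x₀ := by
  have hlip : ∀ c : ℝ, LipschitzWith 1 fun x : ℝ => max (x - c) 0 := fun c => by
    simpa using (LipschitzWith.id.sub (LipschitzWith.const c)).max_const 0
  have hcont : ∀ x : ℝ, Continuous fun c : ℝ => max (x - c) 0 := fun x =>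
    (continuous_const.sub continuous_id).max continuous_const
  have hne : ∀ᵐ c ∂μ, c ≠ x₀ := measure_eq_zero_iff_ae_notMem.1 hx₀
  have key := (hasDerivAt_integral_of_dominated_loc_of_lip (F' := (Iio x₀).indicator 1)
    (bound := fun _ => 1) univ_mem
    (Eventually.of_forall fun x => (hcont x).aestronglyMeasurable)
    ((hcont x₀).integrable_of_ae_mem_Icc hμ)
    (measurable_const.indicator measurableSet_Iio).aestronglyMeasurable
    (Eventually.of_forall fun c => by simpa using hlip c)
    (integrable_const 1)
    (hne.mono fun _ hc => hasDerivAt_max_sub_const_zero hc)).2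
  rwa [integral_indicator_one measurableSet_Iio, Measure.real, measure_congr (Iio_ae_eq_Iic' hx₀)]
    at key

end

theorem prosumer_first_order_condition_general (Cbar : ℝ) (μ : Measure ℝ)
    [IsProbabilityMeasure μ] [NullSingletonClass μ] (hsupp : μ (Set.Icc 0 Cbar)ᶜ = 0)
    (u u' : ℝ → ℝ)
    (hu' : ∀ z, HasDerivAt u (u' z) z) (hu'cont : Continuous u')
    (ρ κ : ℝ) (d0 : ℝ) (xstar : ℝ)
    (hx : xstar ∈ Set.Ioo 0 Cbar)
    (hmax : ∀ x ∈ Set.Icc 0 Cbar,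
      ρ * x + (∫ c, u (d0 + c - x) ∂μ) - κ * (∫ c, max (x - c) 0 ∂μ) ≤
      ρ * xstar + (∫ c, u (d0 + c - xstar) ∂μ) -
        κ * ∫ c, max (xstar - c) 0 ∂μ) :
    κ * (μ (Set.Iic xstar)).toReal = ρ - ∫ c, u' (d0 + c - xstar) ∂μ := by
  have hμ : ∀ᵐ c ∂μ, c ∈ Icc 0 Cbar := mem_ae_iff.2 hsupp
  have hutility := hasDerivAt_integral_comp_sub (f := fun z => u (d0 + z))
    (fun z => (hu' (d0 + z)).comp_const_add d0 z) (hu'cont.comp (continuous_const_add d0)) hμ xstar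
  simp only [← add_sub_assoc] at hutility
  have hprofit : HasDerivAt
      (fun x => ρ * x + (∫ c, u (d0 + c - x) ∂μ) - κ * ∫ c, max (x - c) 0 ∂μ)
      (ρ + (-∫ c, u' (d0 + c - xstar) ∂μ) - κ * (μ (Iic xstar)).toReal) xstar :=
    (((hasDerivAt_id' xstar).const_mul ρ).congr_deriv (mul_one ρ)).add hutility |>.sub
      ((hasDerivAt_integral_max_sub_zero hμ (measure_singleton xstar)).const_mul κ)
  have hlocal : IsLocalMax
      (fun x => ρ * x + (∫ c, u (d0 + c - x) ∂μ) - κ * ∫ c, max (x - c) 0 ∂μ) xstar :=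
    mem_of_superset (Ioo_mem_nhds hx.1 hx.2) fun y hy => hmax y (Ioo_subset_Icc_self hy)
  linarith [hlocal.hasDerivAt_eq_zero hprofit]

/-- First-order characterization of the prosumer's equilibrium offer: if `μ` is
an atomless probability measure supported on `[0, C̄]` with cdf `F`, `u` is
concave and continuously differentiable with derivative `u'`, `ρ ≥ 0`, `κ > 0`,
and `x* ∈ (0, C̄)` maximizes
`π(x) = ρ x + ∫ u(d⁰ + c - x) dμ(c) - κ ∫ (x - c)⁺ dμ(c)` over `[0, C̄]`, then
`κ F(x*) = ρ - ∫ u'(d⁰ + c - x*) dμ(c)`. -/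
theorem prosumer_first_order_condition (Cbar : ℝ) (μ : Measure ℝ)
    [IsProbabilityMeasure μ] [NullSingletonClass μ] (hsupp : μ (Set.Icc 0 Cbar)ᶜ = 0)
    (u u' : ℝ → ℝ) (hu : ConcaveOn ℝ Set.univ u)
    (hu' : ∀ z, HasDerivAt u (u' z) z) (hu'cont : Continuous u')
    (ρ κ : ℝ) (hρ : 0 ≤ ρ) (hκ : 0 < κ) (d0 : ℝ) (xstar : ℝ)
    (hx : xstar ∈ Set.Ioo 0 Cbar)
    (hmax : ∀ x ∈ Set.Icc 0 Cbar,
      ρ * x + (∫ c, u (d0 + c - x) ∂μ) - κ * (∫ c, max (x - c) 0 ∂μ) ≤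
      ρ * xstar + (∫ c, u (d0 + c - xstar) ∂μ) -
        κ * ∫ c, max (xstar - c) 0 ∂μ) :
    κ * (μ (Set.Iic xstar)).toReal = ρ - ∫ c, u' (d0 + c - xstar) ∂μ :=
  prosumer_first_order_condition_general Cbar μ hsupp u u' hu' hu'cont ρ κ d0 xstar hx hmax
end

section
/- Aggregator's equilibrium price with uniform capacity (second part of Proposition 1): let λ_DA, λ_RT, σ > 0, γ ≥ 0 and μ ∈ ℝ. The function π_A(ρ) = (λ_DA − ρ)·(μ − √3·σ + (2√3·σ/λ_RT)·(ρ − γ)) is a strictly concave quadratic in ρ and attains its unique maximum over ℝ at ρ* = (λ_DA + γ)/2 − λ_RT·(μ − √3·σ)/(4√3·σ). -/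
open Real

lemma quad_strictConcave (c m K : ℝ) (hc : 0 < c) :
    StrictConcaveOn ℝ Set.univ (fun x : ℝ => K - c * (x - m) ^ 2) := by
  constructor
  · exact convex_univ
  · intro x _ y _ hxy t s ht hs hts
    simp only [smul_eq_mul]
    have hxy2 : 0 < (x - y) ^ 2 := by
      have := sub_ne_zero_of_ne hxy
      positivity
    have hid : t * (K - c * (x - m) ^ 2) + s * (K - c * (y - m) ^ 2)
        = K - c * (t * x + s * y - m) ^ 2 - c * (t * s * (x - y) ^ 2) := by
      have hs1 : s = 1 - t := by linarith
      subst hs1; ring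
    have hpos : 0 < c * (t * s * (x - y) ^ 2) :=
      mul_pos hc (mul_pos (mul_pos ht hs) hxy2)
    linarith

/-- Aggregator's equilibrium price with uniform capacity (second part of
Proposition 1): the profit `π_A(ρ) = (λ_DA - ρ)(μ - √3 σ + (2√3 σ/λ_RT)(ρ - γ))`
is strictly concave and attains its unique maximum over `ℝ` at
`ρ* = (λ_DA + γ)/2 - λ_RT (μ - √3 σ)/(4 √3 σ)`. -/
theorem aggregator_price_uniform (lamDA lamRT σ γ μ : ℝ)
    (hDA : 0 < lamDA) (hRT : 0 < lamRT) (hσ : 0 < σ) (hγ : 0 ≤ γ) :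
    StrictConcaveOn ℝ Set.univ
      (fun ρ : ℝ => (lamDA - ρ) *
        (μ - Real.sqrt 3 * σ + (2 * Real.sqrt 3 * σ / lamRT) * (ρ - γ))) ∧
    IsMaxOn
      (fun ρ : ℝ => (lamDA - ρ) *
        (μ - Real.sqrt 3 * σ + (2 * Real.sqrt 3 * σ / lamRT) * (ρ - γ)))
      Set.univ
      ((lamDA + γ) / 2 - lamRT * (μ - Real.sqrt 3 * σ) / (4 * Real.sqrt 3 * σ)) ∧
    ∀ ρ : ℝ, IsMaxOn
      (fun ρ : ℝ => (lamDA - ρ) *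
        (μ - Real.sqrt 3 * σ + (2 * Real.sqrt 3 * σ / lamRT) * (ρ - γ)))
      Set.univ ρ →
      ρ = (lamDA + γ) / 2 - lamRT * (μ - Real.sqrt 3 * σ) / (4 * Real.sqrt 3 * σ) := by
  have hs0 : (0:ℝ) < Real.sqrt 3 := Real.sqrt_pos.mpr (by norm_num)
  have hs2 : Real.sqrt 3 ^ 2 = 3 := Real.sq_sqrt (by norm_num)
  set s := Real.sqrt 3 with hsdef
  set c : ℝ := 2 * s * σ / lamRT with hc
  have hcpos : 0 < c := by positivity
  set m : ℝ := (lamDA + γ) / 2 - lamRT * (μ - s * σ) / (4 * s * σ) with hm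
  set f : ℝ → ℝ := fun ρ : ℝ => (lamDA - ρ) * (μ - s * σ + c * (ρ - γ)) with hf
  have key : ∀ x : ℝ, f x = f m - c * (x - m) ^ 2 := by
    intro x
    simp only [hf, hm, hc]
    field_simp
    ring
  have heq : f = fun x => f m - c * (x - m) ^ 2 := funext key
  refine ⟨?_, ?_, ?_⟩
  · rw [heq]; exact quad_strictConcave c m (f m) hcpos
  · intro x _
    simp only [Set.mem_setOf_eq]
    rw [key x]
    nlinarith [sq_nonneg (x - m)]
  · intro ρ hρ
    have h := hρ (Set.mem_univ m)
    simp only [Set.mem_setOf_eq] at h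
    rw [key ρ] at h
    have : c * (ρ - m) ^ 2 ≤ 0 := by linarith
    have h2 : (ρ - m) ^ 2 ≤ 0 := by nlinarith
    have : ρ - m = 0 := by nlinarith [sq_nonneg (ρ - m)]
    linarith
end

section
/- Procurement cost with the aggregator (first part of Proposition 2): let κ > γ ≥ 0, λ_RT > 0, σ > 0, μ ≥ √3·σ, N ≥ 1 and D ∈ ℝ, and define q* = μ − √3·σ + (2√3·σ/λ_RT)·(κ − γ). The strictly convex function f_A(q) = κ·D + λ_RT·q²/(2N·√3·σ) + (γ − κ − (μ − √3·σ)·λ_RT/(2√3·σ))·q attains its unique minimum over [0, ∞) at q*_A = (N/2)·q*, with minimum value C*_A = κ·D − (N·q*/2)·(κ − γ + λ_RT·(μ − √3·σ)/(2√3·σ) − q*·λ_RT/(4√3·σ)). -/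
open Real

/-- Procurement cost with the aggregator (first part of Proposition 2): the
strictly convex dispatch cost
`f_A(q) = κ D + λ_RT q²/(2 N √3 σ) + (γ - κ - (μ - √3 σ) λ_RT/(2 √3 σ)) q`
attains its unique minimum over `[0, ∞)` at `q*_A = (N/2) q*` with
`q* = μ - √3 σ + (2 √3 σ/λ_RT)(κ - γ)`, with minimum value
`C*_A = κ D - (N q*/2)(κ - γ + λ_RT (μ - √3 σ)/(2 √3 σ) - q* λ_RT/(4 √3 σ))`. -/
theorem procurement_cost_aggregator (κ γ lamRT σ μ N D : ℝ)
    (hκγ : γ < κ) (hγ : 0 ≤ γ) (hRT : 0 < lamRT) (hσ : 0 < σ)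
    (hμ : Real.sqrt 3 * σ ≤ μ) (hN : 1 ≤ N) :
    let q : ℝ := μ - Real.sqrt 3 * σ + (2 * Real.sqrt 3 * σ / lamRT) * (κ - γ)
    let fA : ℝ → ℝ := fun q' => κ * D + lamRT * q' ^ 2 / (2 * N * Real.sqrt 3 * σ)
      + (γ - κ - (μ - Real.sqrt 3 * σ) * lamRT / (2 * Real.sqrt 3 * σ)) * q'
    let qA : ℝ := (N / 2) * q
    StrictConvexOn ℝ (Set.Ici 0) fA ∧
    IsMinOn fA (Set.Ici 0) qA ∧ qA ∈ Set.Ici (0 : ℝ) ∧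
    (∀ q' ∈ Set.Ici (0 : ℝ), IsMinOn fA (Set.Ici 0) q' → q' = qA) ∧
    fA qA = κ * D - (N * q / 2) * (κ - γ + lamRT * (μ - Real.sqrt 3 * σ) /
      (2 * Real.sqrt 3 * σ) - q * lamRT / (4 * Real.sqrt 3 * σ)) := by
  intro q fA qA
  have hs3 : (0:ℝ) < Real.sqrt 3 := Real.sqrt_pos.mpr (by norm_num)
  have hN0 : (0:ℝ) < N := lt_of_lt_of_le one_pos hN
  set c : ℝ := lamRT / (2 * N * Real.sqrt 3 * σ) with hc_def
  have hc : 0 < c := by positivity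
  have hform : ∀ x, fA x = κ * D + c * x ^ 2
      + (γ - κ - (μ - Real.sqrt 3 * σ) * lamRT / (2 * Real.sqrt 3 * σ)) * x := by
    intro x; simp only [fA, hc_def]; ring
  have hkey : ∀ x, fA x = fA qA + c * (x - qA) ^ 2 := by
    intro x
    simp only [fA, qA, q, hc_def]
    field_simp
    ring
  have hq0 : 0 ≤ q := by
    have h1 : 0 ≤ (2 * Real.sqrt 3 * σ / lamRT) * (κ - γ) :=
      mul_nonneg (by positivity) (by linarith)
    simp only [q]; linarith
  have hqA0 : qA ∈ Set.Ici (0:ℝ) := by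
    simp only [qA, Set.mem_Ici]
    positivity
  refine ⟨?_, ?_, hqA0, ?_, ?_⟩
  · refine ⟨convex_Ici 0, ?_⟩
    intro x _ y _ hxy a b ha hb hab
    simp only [smul_eq_mul, hform]
    have hxy2 : 0 < (x - y) ^ 2 := pow_two_pos_of_ne_zero (sub_ne_zero.mpr hxy)
    have hb' : b = 1 - a := by linarith
    rw [hb']
    nlinarith [mul_pos (mul_pos ha hb) (mul_pos hc hxy2), hb']
  · rw [isMinOn_iff]
    intro x _
    rw [hkey x]
    nlinarith [sq_nonneg (x - qA), hc]
  · intro x hx hmin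
    have h1 : fA x ≤ fA qA := isMinOn_iff.mp hmin qA hqA0
    rw [hkey x] at h1
    have h2 : (x - qA) ^ 2 ≤ 0 := by nlinarith
    have h3 : (x - qA) ^ 2 = 0 := le_antisymm h2 (sq_nonneg _)
    have := pow_eq_zero_iff (n := 2) (by norm_num) |>.mp h3
    linarith [sub_eq_zero.mp this]
  · simp only [fA, qA, q]
    field_simp
    ring
end

section
/- Strict ordering of procurement costs (consequence of Proposition 2): let κ > γ ≥ 0, λ_RT > 0, σ > 0, μ ≥ √3·σ, N ≥ 1 and D ∈ ℝ, and define q* = μ − √3·σ + (2√3·σ/λ_RT)·(κ − γ), C*_A = κ·D − (N·q*/2)·K and C*_P = κ·D − N·q*·K, where K = κ − γ + λ_RT·(μ − √3·σ)/(2√3·σ) − q*·λ_RT/(4√3·σ). Then q* > 0, K > 0, and κ·D > C*_A > C*_P. -/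
open Real

/-- Strict ordering of procurement costs (consequence of Proposition 2):
with `q* = μ - √3 σ + (2 √3 σ/λ_RT)(κ - γ)`,
`K = κ - γ + λ_RT (μ - √3 σ)/(2 √3 σ) - q* λ_RT/(4 √3 σ)`,
`C*_A = κ D - (N q*/2) K` and `C*_P = κ D - N q* K`, we have `q* > 0`,
`K > 0` and `κ D > C*_A > C*_P`. -/
theorem procurement_cost_ordering (κ γ lamRT σ μ N D : ℝ)
    (hκγ : γ < κ) (hγ : 0 ≤ γ) (hRT : 0 < lamRT) (hσ : 0 < σ)
    (hμ : Real.sqrt 3 * σ ≤ μ) (hN : 1 ≤ N) :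
    let q : ℝ := μ - Real.sqrt 3 * σ + (2 * Real.sqrt 3 * σ / lamRT) * (κ - γ)
    let K : ℝ := κ - γ + lamRT * (μ - Real.sqrt 3 * σ) / (2 * Real.sqrt 3 * σ)
      - q * lamRT / (4 * Real.sqrt 3 * σ)
    let CA : ℝ := κ * D - (N * q / 2) * K
    let CP : ℝ := κ * D - N * q * K
    0 < q ∧ 0 < K ∧ CA < κ * D ∧ CP < CA := by
  intro q K CA CP
  have hs3 : (0:ℝ) < Real.sqrt 3 := Real.sqrt_pos.mpr (by norm_num)
  have hs : (0:ℝ) < Real.sqrt 3 * σ := mul_pos hs3 hσ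
  have hμs : (0:ℝ) ≤ μ - Real.sqrt 3 * σ := sub_nonneg.mpr hμ
  have hκγ' : (0:ℝ) < κ - γ := sub_pos.mpr hκγ
  have hq : 0 < q := by
    have : 0 < (2 * Real.sqrt 3 * σ / lamRT) * (κ - γ) := by
      apply mul_pos (div_pos (by linarith [mul_pos hs3 hσ]) hRT) hκγ'
    simp only [q]; linarith
  have hKeq : K = (κ - γ)/2 + lamRT * (μ - Real.sqrt 3 * σ) / (4 * (Real.sqrt 3 * σ)) := by
    simp only [K, q]
    field_simp
    ring
  have hK : 0 < K := by
    rw [hKeq]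
    have h1 : 0 ≤ lamRT * (μ - Real.sqrt 3 * σ) / (4 * (Real.sqrt 3 * σ)) := by positivity
    linarith
  have hNqK : 0 < N * q * K := by
    apply mul_pos (mul_pos (by linarith) hq) hK
  have h2 : N * q / 2 * K = (N * q * K) / 2 := by ring
  refine ⟨hq, hK, ?_, ?_⟩ <;> simp only [CA, CP] <;>
    clear_value q K CA CP <;> linarith
end

section
/- Halving of cleared DER supply due to aggregation (consequence of Proposition 2): let κ > γ ≥ 0, λ_RT > 0, σ > 0, μ ≥ √3·σ and N ≥ 1. The total DER quantity cleared in the wholesale market with the profit-maximizing aggregator, q*_A = (N/2)·(μ − √3·σ + (2√3·σ/λ_RT)·(κ − γ)), equals exactly half of the total DER quantity cleared under direct prosumer participation, N·q* with q* = μ − √3·σ + (2√3·σ/λ_RT)·(κ − γ); i.e., q*_A = N·q*/2. -/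
open Real

lemma IsMinOn.eq_vertex_of_quadratic {a v c x₀ : ℝ} {s : Set ℝ} (ha : 0 < a) (hv : v ∈ s)
    (h : IsMinOn (fun x => a * x ^ 2 - 2 * a * v * x + c) s x₀) : x₀ = v := by
  have hle : a * x₀ ^ 2 - 2 * a * v * x₀ + c ≤ a * v ^ 2 - 2 * a * v * v + c :=
    isMinOn_iff.mp h v hv
  have hsq : (x₀ - v) ^ 2 ≤ 0 :=
    nonpos_of_mul_nonpos_right (by linarith : a * (x₀ - v) ^ 2 ≤ 0) ha
  exact sub_eq_zero.mp (pow_eq_zero_iff two_ne_zero |>.mp (le_antisymm hsq (sq_nonneg _)))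

theorem halving_of_cleared_supply_general (κ γ lamRT σ μ N D : ℝ)
    (hκγ : γ < κ) (hRT : 0 < lamRT) (hσ : 0 < σ)
    (hμ : Real.sqrt 3 * σ ≤ μ) (hN : 1 ≤ N)
    (qA q : ℝ)
    (hminA : IsMinOn (fun q' => κ * D + lamRT * q' ^ 2 / (2 * N * Real.sqrt 3 * σ)
      + (γ - κ - (μ - Real.sqrt 3 * σ) * lamRT / (2 * Real.sqrt 3 * σ)) * q')
      (Set.Ici 0) qA)
    (hminP : IsMinOn (fun q' => κ * D + N * lamRT * q' ^ 2 / (4 * Real.sqrt 3 * σ)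
      + (γ - κ - (μ - Real.sqrt 3 * σ) * lamRT / (2 * Real.sqrt 3 * σ)) * N * q')
      (Set.Ici 0) q) :
    q = μ - Real.sqrt 3 * σ + (2 * Real.sqrt 3 * σ / lamRT) * (κ - γ) ∧
    qA = N * q / 2 := by
  set v := μ - Real.sqrt 3 * σ + (2 * Real.sqrt 3 * σ / lamRT) * (κ - γ) with hv_def
  have hN0 : 0 < N := by linarith
  have hv : 0 ≤ v := by
    have : 0 ≤ 2 * Real.sqrt 3 * σ / lamRT * (κ - γ) :=
      mul_nonneg (by positivity) (sub_nonneg.mpr hκγ.le)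
    linarith
  have hq : q = v := by
    refine IsMinOn.eq_vertex_of_quadratic (a := N * lamRT / (4 * Real.sqrt 3 * σ))
      (c := κ * D) (by positivity) (Set.mem_Ici.mpr hv) ?_
    convert hminP using 2 with x
    rw [hv_def]
    field_simp
    ring
  refine ⟨hq, ?_⟩
  -- `f_A` has the linear coefficient of `f_P / N` but `2 / N` times its curvature,
  -- so its vertex is `v` scaled by `N / 2`.
  rw [hq]
  refine IsMinOn.eq_vertex_of_quadratic (a := lamRT / (2 * N * Real.sqrt 3 * σ))
    (c := κ * D) (by positivity) (Set.mem_Ici.mpr (by positivity)) ?_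
  convert hminA using 2 with x
  rw [hv_def]
  field_simp
  ring

/-- Halving of cleared DER supply due to aggregation (consequence of
Proposition 2): the total DER quantity `q*_A` cleared with the
profit-maximizing aggregator (the minimizer over `[0, ∞)` of the dispatch cost
`f_A`) equals exactly half of the total quantity `N q*` cleared under direct
participation (`q*` being the minimizer over `[0, ∞)` of the per-prosumer
dispatch cost `f_P`): `q*_A = N q*/2`, with
`q* = μ - √3 σ + (2 √3 σ/λ_RT)(κ - γ)`. -/
theorem halving_of_cleared_supply (κ γ lamRT σ μ N D : ℝ)
    (hκγ : γ < κ) (hγ : 0 ≤ γ) (hRT : 0 < lamRT) (hσ : 0 < σ)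
    (hμ : Real.sqrt 3 * σ ≤ μ) (hN : 1 ≤ N)
    (qA q : ℝ) (hqA : qA ∈ Set.Ici (0 : ℝ)) (hq : q ∈ Set.Ici (0 : ℝ))
    (hminA : IsMinOn (fun q' => κ * D + lamRT * q' ^ 2 / (2 * N * Real.sqrt 3 * σ)
      + (γ - κ - (μ - Real.sqrt 3 * σ) * lamRT / (2 * Real.sqrt 3 * σ)) * q')
      (Set.Ici 0) qA)
    (hminP : IsMinOn (fun q' => κ * D + N * lamRT * q' ^ 2 / (4 * Real.sqrt 3 * σ)
      + (γ - κ - (μ - Real.sqrt 3 * σ) * lamRT / (2 * Real.sqrt 3 * σ)) * N * q')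
      (Set.Ici 0) q) :
    q = μ - Real.sqrt 3 * σ + (2 * Real.sqrt 3 * σ / lamRT) * (κ - γ) ∧
    qA = N * q / 2 :=
  halving_of_cleared_supply_general κ γ lamRT σ μ N D hκγ hRT hσ hμ hN qA q hminA hminP
end
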